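/- Let k ≥ 1 be an integer and let (ε_1,…,ε_n) be an admissible word such that the basic interval I(ε_1,…,ε_n) is full. Then the closure of the basic interval I(ε_1,…,ε_n, ε*_1,…,ε*_k, 0^{t_k+1}) is contained in the interior of I(ε_1,…,ε_n). -/

import Mathlib

open MeasureTheory Filter Set

noncomputable section

/-- The β-transformation on `(0,1]`: `T_β x = βx − ⌈βx⌉ + 1`. -/
def Tbeta (β x : ℝ) : ℝ := β * x - ⌈β * x⌉ + 1

/-- The digits of the β-expansion, 0-indexed: `eps β x n` is the `(n+1)`-st digit
`ε_{n+1}(x,β) = ⌈β T_β^n x⌉ − 1`. -/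
def eps (β x : ℝ) (n : ℕ) : ℤ := ⌈β * (Tbeta β)^[n] x⌉ - 1

/-- The basic interval of order `n` containing `x`:
all `y ∈ (0,1]` whose first `n` digits agree with those of `x`. -/
def In (β x : ℝ) (n : ℕ) : Set ℝ := {y ∈ Ioc (0:ℝ) 1 | ∀ j < n, eps β y j = eps β x j}

/-- The length of a set (Lebesgue measure). -/
def len (s : Set ℝ) : ℝ := (volume s).toReal

/-- `tseq β n = t_n`: the maximal length of the block of zero digits of the
β-expansion of `1` immediately following position `n` (digits `ε*_{n+1},…,ε*_{n+k}`). -/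
def tseq (β : ℝ) (n : ℕ) : ℕ := sSup {k : ℕ | ∀ j < k, eps β 1 (n + j) = 0}

/-- `Gam β n = Γ_n = max_{1 ≤ k ≤ n} t_k`. -/
def Gam (β : ℝ) (n : ℕ) : ℕ := Finset.sup (Finset.Icc 1 n) (tseq β)

/-- `lam β = λ(β) = limsup_n Γ_n / n`. -/
def lam (β : ℝ) : ℝ := Filter.limsup (fun n : ℕ => (Gam β n : ℝ) / n) atTop

/-- `kstar β x n = k_n^*(x)`: the smallest `k ≥ 0` such that
`(ε_{k+1}(x),…,ε_n(x)) = (ε*_1,…,ε*_{n−k})`. -/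
def kstar (β x : ℝ) (n : ℕ) : ℕ := sInf {k : ℕ | ∀ i < n - k, eps β x (k + i) = eps β 1 i}

/-- `tau β x = τ(x) = limsup_n t_{n − k_n^*(x)} / n`. -/
def tau (β x : ℝ) : ℝ :=
  Filter.limsup (fun n : ℕ => (tseq β (n - kstar β x n) : ℝ) / n) atTop

/-- The upper density `\overline{D}(x) = limsup_n (−log_β |I_n(x)|)/n`. -/
def upperD (β x : ℝ) : ℝ :=
  Filter.limsup (fun n : ℕ => -Real.logb β (len (In β x n)) / n) atTop

/-- The lower density `\underline{D}(x) = liminf_n (−log_β |I_n(x)|)/n`. -/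
def lowerD (β x : ℝ) : ℝ :=
  Filter.liminf (fun n : ℕ => -Real.logb β (len (In β x n)) / n) atTop

/-- The basic interval (cylinder) associated to a finite word `w` of digits:
all `x ∈ (0,1]` whose β-expansion starts with `w`. -/
def cyl (β : ℝ) (w : List ℤ) : Set ℝ :=
  {x ∈ Ioc (0:ℝ) 1 | ∀ j < w.length, eps β x j = w.getD j 0}

/-- A finite word is admissible if it occurs as the initial digits of some `x ∈ (0,1]`. -/
def Admissible (β : ℝ) (w : List ℤ) : Prop := (cyl β w).Nonempty

/-- A basic interval is full if its length is `β^{−n}` where `n` is the order. -/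
def IsFull (β : ℝ) (w : List ℤ) : Prop := len (cyl β w) = β ^ (-(w.length : ℤ))

/-- The word `(ε*_1,…,ε*_n)` of the first `n` digits of the β-expansion of `1`. -/
def estarWord (β : ℝ) (n : ℕ) : List ℤ := (List.range n).map (eps β 1)

/-- The interior of a set relative to the subspace `[0,1]`
(for `S ⊆ [0,1]` this is exactly the interior of `S` in the topology of `[0,1]`). -/
def intIn01 (S : Set ℝ) : Set ℝ := Icc 0 1 \ closure (Icc 0 1 \ S)

/-!
Iterating `T_β x = βx − ε_1(x)` gives `x = ∑_{j<n} ε_{j+1}(x) β^{-(j+1)} + β^{-n} T_β^n x`, so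
the cylinder of a word `w` of length `n` lies in `(a, a + β^{-n}]`, `a = wordValue β w`. Cylinders
are order-connected, so a full one contains all of `(a, a + β^{-n})`.

Appending `v = ε*_1 ⋯ ε*_k 0^{t_k+1}` puts the subcylinder at relative position
`[b, b + β^{-(k+t_k+1)}]`, where `b = ∑_{j<k} ε*_{j+1} β^{-(j+1)} > 0` because `ε*_1 ≥ 1`. Expanding
`1 = b + β^{-k} T_β^k 1` and using `T_β^{k+t_k} 1 = β^{t_k} T_β^k 1 > β^{-1}` (the digit
`ε*_{k+t_k+1}` is nonzero) gives `b + β^{-(k+t_k+1)} < 1`. Hence the closed subcylinder lies in the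
open interval, which is interior to the full cylinder.
-/

variable {β x : ℝ}

lemma Tbeta_mem_Ioc (β x : ℝ) : Tbeta β x ∈ Ioc (0 : ℝ) 1 := by
  have h₁ := Int.ceil_lt_add_one (β * x)
  have h₂ := Int.le_ceil (β * x)
  constructor <;> unfold Tbeta <;> linarith

lemma iterate_Tbeta_mem_Ioc (β : ℝ) (hx : x ∈ Ioc (0 : ℝ) 1) :
    ∀ n, (Tbeta β)^[n] x ∈ Ioc (0 : ℝ) 1
  | 0 => hx
  | n + 1 => by rw [Function.iterate_succ_apply']; exact Tbeta_mem_Ioc _ _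

lemma iterate_Tbeta_succ (β x : ℝ) (n : ℕ) :
    (Tbeta β)^[n + 1] x = β * (Tbeta β)^[n] x - eps β x n := by
  rw [Function.iterate_succ_apply', Tbeta, eps]
  push_cast
  ring

lemma eps_add (β x : ℝ) (n j : ℕ) : eps β x (n + j) = eps β ((Tbeta β)^[n] x) j := by
  rw [eps, eps, Nat.add_comm, Function.iterate_add_apply]

lemma eps_nonneg (hβ : 0 < β) (hx : x ∈ Ioc (0 : ℝ) 1) (n : ℕ) : 0 ≤ eps β x n := by
  have := Int.ceil_pos.mpr (mul_pos hβ (iterate_Tbeta_mem_Ioc β hx n).1)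
  rw [eps]
  omega

lemma one_le_eps_iff (β x : ℝ) (n : ℕ) : 1 ≤ eps β x n ↔ 1 < β * (Tbeta β)^[n] x := by
  rw [eps, ← Int.cast_one (R := ℝ), ← Int.lt_ceil]
  omega

def wordValue (β : ℝ) (w : List ℤ) : ℝ :=
  ∑ j ∈ Finset.range w.length, (w.getD j 0 : ℝ) * (β ^ (j + 1))⁻¹

lemma wordValue_append (β : ℝ) (u v : List ℤ) :
    wordValue β (u ++ v) = wordValue β u + (β ^ u.length)⁻¹ * wordValue β v := by
  rw [wordValue, wordValue, wordValue, List.length_append, Finset.sum_range_add, Finset.mul_sum]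
  congr 1
  · refine Finset.sum_congr rfl fun j hj => ?_
    rw [List.getD_append _ _ _ _ (Finset.mem_range.mp hj)]
  · refine Finset.sum_congr rfl fun j _ => ?_
    rw [List.getD_append_right _ _ _ _ (Nat.le_add_right _ _), Nat.add_sub_cancel_left,
      add_assoc, pow_add, mul_inv]
    ring

@[simp]
lemma wordValue_replicate_zero (β : ℝ) (m : ℕ) : wordValue β (List.replicate m 0) = 0 := by
  simp [wordValue]

@[simp]
lemma wordValue_singleton (β : ℝ) (d : ℤ) : wordValue β [d] = d * β⁻¹ := by
  simp [wordValue]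

/-- `estarWord β n` is `digits β 1 n` by definition. -/
def digits (β x : ℝ) (n : ℕ) : List ℤ := (List.range n).map (eps β x)

lemma eq_wordValue_digits_add (hβ : β ≠ 0) (x : ℝ) (n : ℕ) :
    x = wordValue β (digits β x n) + (β ^ n)⁻¹ * (Tbeta β)^[n] x := by
  induction n with
  | zero => simp [wordValue, digits]
  | succ n ih =>
    rw [digits, List.range_succ, List.map_append, wordValue_append, List.map_singleton,
      wordValue_singleton, List.length_map, List.length_range, iterate_Tbeta_succ, pow_succ]
    rw [← digits]
    nth_rewrite 1 [ih]
    field_simp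
    ring

lemma digits_eq_of_mem_cyl {w : List ℤ} (hx : x ∈ cyl β w) : digits β x w.length = w := by
  refine List.ext_getElem (by simp [digits]) fun j h₁ h₂ => ?_
  have := hx.2 j h₂
  rw [List.getD_eq_getElem _ _ h₂] at this
  simpa [digits] using this

lemma cyl_subset_Ioc (hβ : 0 < β) (w : List ℤ) :
    cyl β w ⊆ Ioc (wordValue β w) (wordValue β w + (β ^ w.length)⁻¹) := by
  intro x hx
  have hexp := eq_wordValue_digits_add hβ.ne' x w.length
  rw [digits_eq_of_mem_cyl hx] at hexp
  have hT := iterate_Tbeta_mem_Ioc β hx.1 w.length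
  have hp : (0 : ℝ) < (β ^ w.length)⁻¹ := by positivity
  constructor <;> rw [hexp] <;> nlinarith [hT.1, hT.2]

/-- On each branch `T_β` is the increasing map `y ↦ βy - d`. -/
lemma eps_eq_of_le_of_le (hβ : 0 ≤ β) {y z : ℝ} (hxy : x ≤ y) (hyz : y ≤ z) (n : ℕ)
    (h : ∀ i < n, eps β x i = eps β z i) :
    (∀ i < n, eps β y i = eps β x i) ∧
      (Tbeta β)^[n] x ≤ (Tbeta β)^[n] y ∧ (Tbeta β)^[n] y ≤ (Tbeta β)^[n] z := by
  induction n with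
  | zero => exact ⟨fun i hi => absurd hi (Nat.not_lt_zero i), hxy, hyz⟩
  | succ n ih =>
    obtain ⟨hd, h₁, h₂⟩ := ih fun i hi => h i (Nat.lt_succ_of_lt hi)
    have hxz := h n (Nat.lt_succ_self n)
    have hxy' : eps β x n ≤ eps β y n :=
      Int.sub_le_sub_right (Int.ceil_le_ceil (mul_le_mul_of_nonneg_left h₁ hβ)) 1
    have hyz' : eps β y n ≤ eps β z n :=
      Int.sub_le_sub_right (Int.ceil_le_ceil (mul_le_mul_of_nonneg_left h₂ hβ)) 1
    have hy : eps β y n = eps β x n := by omega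
    refine ⟨fun i hi => ?_, ?_, ?_⟩
    · rcases Nat.lt_succ_iff_lt_or_eq.mp hi with hi | rfl
      exacts [hd i hi, hy]
    · rw [iterate_Tbeta_succ, iterate_Tbeta_succ, hy]; nlinarith
    · rw [iterate_Tbeta_succ, iterate_Tbeta_succ, hy, hxz]; nlinarith

lemma cyl_ordConnected (hβ : 0 ≤ β) (w : List ℤ) : (cyl β w).OrdConnected := by
  refine ⟨fun x hx z hz y hy => ?_⟩
  have hsq := eps_eq_of_le_of_le hβ hy.1 hy.2 w.length fun i hi =>
    (hx.2 i hi).trans (hz.2 i hi).symm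
  exact ⟨⟨hx.1.1.trans_le hy.1, hy.2.trans hz.1.2⟩,
    fun j hj => (hsq.1 j hj).trans (hx.2 j hj)⟩

/-- A gap at `y` would confine `s` to `[a, y]` or to `[y, b]`. -/
lemma Set.OrdConnected.Ioo_subset_of_le_volume_real {s : Set ℝ} {a b : ℝ} (hs : s.OrdConnected)
    (hsub : s ⊆ Icc a b) (hvol : b - a ≤ volume.real s) : Ioo a b ⊆ s := by
  intro y hy
  by_contra hys
  have hsplit : s ⊆ Icc a y ∨ s ⊆ Icc y b := by
    by_cases h : ∃ p ∈ s, p < y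
    · obtain ⟨p, hp, hpy⟩ := h
      refine Or.inl fun q hq => ⟨(hsub hq).1, le_of_not_gt fun hyq => hys ?_⟩
      exact hs.out hp hq ⟨hpy.le, hyq.le⟩
    · push Not at h
      exact Or.inr fun q hq => ⟨h q hq, (hsub hq).2⟩
  rcases hsplit with h | h
  · have := measureReal_mono (μ := volume) h measure_Icc_lt_top.ne
    rw [Real.volume_real_Icc_of_le hy.1.le] at this
    linarith [hy.2]
  · have := measureReal_mono (μ := volume) h measure_Icc_lt_top.ne
    rw [Real.volume_real_Icc_of_le hy.2.le] at this
    linarith [hy.1]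

lemma Ioo_subset_cyl_of_isFull (hβ : 0 < β) {w : List ℤ} (hfull : IsFull β w) :
    Ioo (wordValue β w) (wordValue β w + (β ^ w.length)⁻¹) ⊆ cyl β w := by
  refine (cyl_ordConnected hβ.le w).Ioo_subset_of_le_volume_real
    ((cyl_subset_Ioc hβ w).trans Ioc_subset_Icc_self) ?_
  rw [add_sub_cancel_left, ← zpow_natCast, ← zpow_neg]
  exact hfull.ge

lemma interior_subset_intIn01 {s : Set ℝ} (hs : s ⊆ Icc 0 1) : interior s ⊆ intIn01 s := by
  intro x hx
  refine ⟨hs (interior_subset hx), fun hcl => ?_⟩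
  have : closure (Icc 0 1 \ s) ⊆ closure sᶜ := closure_mono fun y hy => hy.2
  rw [closure_compl] at this
  exact this hcl hx

lemma iterate_Tbeta_eq_pow_mul (hβ : β ≠ 0) {m : ℕ} (h : ∀ j < m, eps β x j = 0) :
    (Tbeta β)^[m] x = β ^ m * x := by
  have hexp := eq_wordValue_digits_add hβ x m
  have hzero : digits β x m = List.replicate m 0 :=
    List.ext_getElem (by simp [digits]) fun j h₁ _ => by
      simpa [digits] using h j (by simpa [digits] using h₁)
  rw [hzero, wordValue_replicate_zero, zero_add] at hexp
  conv_rhs => rw [hexp, ← mul_assoc, mul_inv_cancel₀ (pow_ne_zero m hβ), one_mul]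

lemma tseq_bddAbove (hβ : 1 < β) (k : ℕ) :
    BddAbove {m : ℕ | ∀ j < m, eps β 1 (k + j) = 0} := by
  have h₁ : (1 : ℝ) ∈ Ioc (0 : ℝ) 1 := ⟨zero_lt_one, le_rfl⟩
  have hy : 0 < (Tbeta β)^[k] 1 := (iterate_Tbeta_mem_Ioc β h₁ k).1
  obtain ⟨N, hN⟩ := pow_unbounded_of_one_lt ((Tbeta β)^[k] 1)⁻¹ hβ
  refine ⟨N, fun m hm => le_of_not_gt fun hNm => ?_⟩
  have hiter : (Tbeta β)^[m] ((Tbeta β)^[k] 1) = β ^ m * (Tbeta β)^[k] 1 :=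
    iterate_Tbeta_eq_pow_mul (by positivity) fun j hj => by rw [← eps_add]; exact hm j hj
  have hle : β ^ m * (Tbeta β)^[k] 1 ≤ 1 :=
    hiter ▸ (iterate_Tbeta_mem_Ioc β (iterate_Tbeta_mem_Ioc β h₁ k) m).2
  have hNm : β ^ N ≤ β ^ m := pow_le_pow_right₀ hβ.le hNm.le
  have : 1 < β ^ N * (Tbeta β)^[k] 1 := by rwa [← inv_lt_iff_one_lt_mul₀ hy]
  nlinarith

lemma eps_add_tseq (hβ : 1 < β) (k : ℕ) :
    (∀ j < tseq β k, eps β 1 (k + j) = 0) ∧ 1 ≤ eps β 1 (k + tseq β k) := by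
  have hmem : ∀ j < tseq β k, eps β 1 (k + j) = 0 :=
    Nat.sSup_mem ⟨0, by simp⟩ (tseq_bddAbove hβ k)
  refine ⟨hmem, ?_⟩
  have hne : eps β 1 (k + tseq β k) ≠ 0 := fun h0 => by
    have : tseq β k + 1 ≤ tseq β k := le_csSup (tseq_bddAbove hβ k) fun j hj => by
      rcases Nat.lt_succ_iff_lt_or_eq.mp hj with hj | rfl
      exacts [hmem j hj, h0]
    omega
  have := eps_nonneg (zero_lt_one.trans hβ) ⟨zero_lt_one, le_rfl⟩ (k + tseq β k)
  omega

lemma wordValue_estarWord_pos (hβ : 1 < β) {k : ℕ} (hk : 0 < k) :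
    0 < wordValue β (estarWord β k) := by
  have hβ0 : 0 < β := zero_lt_one.trans hβ
  have hgetD : ∀ j ∈ Finset.range (estarWord β k).length,
      (estarWord β k).getD j 0 = eps β 1 j := fun j hj => by
      rw [List.getD_eq_getElem _ _ (Finset.mem_range.mp hj)]
      simp [estarWord]
  refine Finset.sum_pos' (fun j hj => ?_) ⟨0, by simpa [estarWord] using hk, ?_⟩
  · rw [hgetD j hj]
    have := eps_nonneg hβ0 ⟨zero_lt_one, le_rfl⟩ j
    positivity
  · rw [hgetD 0 (by simpa [estarWord] using hk)]
    have : (1 : ℤ) ≤ eps β 1 0 := (one_le_eps_iff β 1 0).mpr (by simpa using hβ)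
    have : (1 : ℝ) ≤ eps β 1 0 := by exact_mod_cast this
    positivity

lemma wordValue_estarWord_add_lt_one (hβ : 1 < β) (k : ℕ) :
    wordValue β (estarWord β k) + (β ^ (k + tseq β k + 1))⁻¹ < 1 := by
  have hβ0 : 0 < β := zero_lt_one.trans hβ
  obtain ⟨hzero, hone⟩ := eps_add_tseq hβ k
  set y := (Tbeta β)^[k] 1
  have hexp : 1 = wordValue β (estarWord β k) + (β ^ k)⁻¹ * y :=
    eq_wordValue_digits_add hβ0.ne' 1 k
  have hy : (Tbeta β)^[tseq β k] y = β ^ tseq β k * y :=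
    iterate_Tbeta_eq_pow_mul hβ0.ne' fun j hj => by rw [← eps_add]; exact hzero j hj
  have hlt : 1 < β * (β ^ tseq β k * y) := by
    rwa [one_le_eps_iff, add_comm, Function.iterate_add_apply, hy] at hone
  have hy' : (β ^ (tseq β k + 1))⁻¹ < y := by
    rw [inv_lt_iff_one_lt_mul₀ (by positivity)]
    linarith [show β ^ (tseq β k + 1) * y = β * (β ^ tseq β k * y) by ring]
  calc wordValue β (estarWord β k) + (β ^ (k + tseq β k + 1))⁻¹
      = wordValue β (estarWord β k) + (β ^ k)⁻¹ * (β ^ (tseq β k + 1))⁻¹ := by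
        rw [add_assoc k, pow_add, mul_inv]
    _ < wordValue β (estarWord β k) + (β ^ k)⁻¹ * y := by gcongr
    _ = 1 := hexp.symm

lemma closure_cyl_append_subset_Ioo (hβ : 0 < β) (w : List ℤ) {v : List ℤ}
    (hpos : 0 < wordValue β v) (hlt : wordValue β v + (β ^ v.length)⁻¹ < 1) :
    closure (cyl β (w ++ v)) ⊆ Ioo (wordValue β w) (wordValue β w + (β ^ w.length)⁻¹) := by
  have he : 0 < (β ^ w.length)⁻¹ := by positivity
  refine (closure_minimal ((cyl_subset_Ioc hβ _).trans Ioc_subset_Icc_self) isClosed_Icc).trans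
    (Icc_subset_Ioo ?_ ?_)
  · rw [wordValue_append]
    exact lt_add_of_pos_right _ (mul_pos he hpos)
  · rw [wordValue_append, List.length_append, pow_add, mul_inv, add_assoc, ← mul_add]
    have := mul_lt_mul_of_pos_left hlt he
    linarith

theorem closure_subset_interior_full_general (β : ℝ) (hβ : 1 < β) (k : ℕ) (hk : 1 ≤ k)
    (w : List ℤ) (hfull : IsFull β w) :
    closure (cyl β (w ++ estarWord β k ++ List.replicate (tseq β k + 1) 0))
      ⊆ intIn01 (cyl β w) := by
  have hβ0 : 0 < β := zero_lt_one.trans hβ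
  have hv_len :
      (estarWord β k ++ List.replicate (tseq β k + 1) 0).length = k + tseq β k + 1 := by
    simp [estarWord, add_assoc]
  have hv_val : wordValue β (estarWord β k ++ List.replicate (tseq β k + 1) 0) =
      wordValue β (estarWord β k) := by
    simp [wordValue_append]
  rw [List.append_assoc]
  calc _ ⊆ Ioo (wordValue β w) (wordValue β w + (β ^ w.length)⁻¹) :=
        closure_cyl_append_subset_Ioo hβ0 w (hv_val ▸ wordValue_estarWord_pos hβ hk)
          (hv_val ▸ hv_len ▸ wordValue_estarWord_add_lt_one hβ k)
    _ ⊆ interior (cyl β w) := interior_maximal (Ioo_subset_cyl_of_isFull hβ0 hfull) isOpen_Ioo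
    _ ⊆ intIn01 (cyl β w) := interior_subset_intIn01 fun x hx => Ioc_subset_Icc_self hx.1

/-- Let `k ≥ 1` and let `(ε_1,…,ε_n)` be an admissible word whose basic
interval is full. Then the closure of the basic interval
`I(ε_1,…,ε_n, ε*_1,…,ε*_k, 0^{t_k+1})` is contained in the interior of `I(ε_1,…,ε_n)`
taken in `[0,1]`. -/
theorem closure_subset_interior_full (β : ℝ) (hβ : 1 < β) (k : ℕ) (hk : 1 ≤ k)
    (w : List ℤ) (hadm : Admissible β w) (hfull : IsFull β w) :
    closure (cyl β (w ++ estarWord β k ++ List.replicate (tseq β k + 1) 0))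
      ⊆ intIn01 (cyl β w) :=
  closure_subset_interior_full_general β hβ k hk w hfull
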